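/- arXiv:1012.4949 — 2 statements merged into one kernel-verified Lean document; each statement's English description precedes it below -/
import Mathlib

section
/- Let F = Frac(ℚ[x₁,…,xₙ]) and let (y, B) be a seed such that y₁,…,yₙ are algebraically independent over ℚ and generate F as a field extension of ℚ (i.e., y is a free generating set of F). Then for every index i the entries of the mutated cluster in μ_i(y,B) = (y', μ_i(B)) are again algebraically independent over ℚ and generate F as a field extension of ℚ. -/
open scoped BigOperators

/-- The field `F = Frac(ℚ[x₁,…,xₙ])` of rational functions in `n` variables over `ℚ`. -/
abbrev F (n : ℕ) := FractionRing (MvPolynomial (Fin n) ℚ)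

/-- Fomin–Zelevinsky matrix mutation of a skew-symmetric integer matrix at index `i`. -/
def mutate {n : ℕ} (B : Matrix (Fin n) (Fin n) ℤ) (i : Fin n) : Matrix (Fin n) (Fin n) ℤ :=
  Matrix.of fun j k =>
    if j = i ∨ k = i then -B j k
    else B j k + max (B j i) 0 * max (B i k) 0 - max (-B j i) 0 * max (-B i k) 0

/-- Seed mutation at index `i`: the `i`-th cluster variable `yᵢ` is replaced by
`(∏ⱼ yⱼ^{max(bⱼᵢ,0)} + ∏ⱼ yⱼ^{max(−bⱼᵢ,0)}) / yᵢ`, and `B` is mutated. -/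
noncomputable def seedMutate {n : ℕ}
    (s : (Fin n → F n) × Matrix (Fin n) (Fin n) ℤ) (i : Fin n) :
    (Fin n → F n) × Matrix (Fin n) (Fin n) ℤ :=
  (Function.update s.1 i
      ((∏ j, s.1 j ^ (max (s.2 j i) 0).toNat + ∏ j, s.1 j ^ (max (-s.2 j i) 0).toNat) / s.1 i),
    mutate s.2 i)

/-! In the exchange relation `yᵢ · yᵢ' = P`, the binomial `P` is a nonzero polynomial in the
`yⱼ` with `j ≠ i`: its exponents at `i` vanish because `bᵢᵢ = 0`, and it is nonzero because the
`yⱼ` are independent. Multiplying the inverse of the transcendental `yᵢ` by the nonzero `P` keeps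
it transcendental over `ℚ[yⱼ : j ≠ i]`, and `yᵢ = P / yᵢ'` recovers the old cluster from the new
one. -/

section Transcendental

variable {R : Type*} [CommRing R]

theorem Transcendental.inv {K : Type*} [Field K] [Algebra R K] {x : K}
    (hx : Transcendental R x) : Transcendental R x⁻¹ :=
  fun h ↦ hx (IsAlgebraic.inv_iff.mp h)

theorem Transcendental.smul {A : Type*} [Ring A] [Algebra R A] {x : A}
    (hx : Transcendental R x) {r : R} (hr : r ∈ nonZeroDivisors R) :
    Transcendental R (r • x) :=
  fun h ↦ hx (h.of_smul hr)

end Transcendental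

section Exchange

variable {ι R K : Type*} [DecidableEq ι] [CommRing R] [Field K] [Algebra R K]

theorem algebraicIndependent_update_iff {x : ι → K} {i : ι} {a : K} :
    AlgebraicIndependent R (Function.update x i a) ↔
      AlgebraicIndepOn R x {i}ᶜ ∧ Transcendental (Algebra.adjoin R (x '' {i}ᶜ)) a := by
  have hcompl : insert i ({i}ᶜ : Set ι) = Set.univ :=
    Set.ext fun j ↦ by by_cases h : j = i <;> simp [h]
  have hi : i ∉ ({i}ᶜ : Set ι) := by simp
  rw [← AlgebraicIndepOn.univ, ← hcompl, AlgebraicIndepOn.insert_iff hi, Function.update_self]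
  have hagree : Set.EqOn (Function.update x i a) x {i}ᶜ :=
    fun j hj ↦ Function.update_of_ne hj a x
  have hrestrict :
      (fun j : ({i}ᶜ : Set ι) ↦ Function.update x i a j) = fun j : ({i}ᶜ : Set ι) ↦ x j :=
    funext fun j ↦ hagree j.2
  rw [AlgebraicIndepOn, hrestrict, hagree.image_eq]

theorem AlgebraicIndependent.update_div {x : ι → K} (hx : AlgebraicIndependent R x) {i : ι}
    {p : K} (hp : p ∈ Algebra.adjoin R (x '' {i}ᶜ)) (hp0 : p ≠ 0) :
    AlgebraicIndependent R (Function.update x i (p / x i)) := by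
  rw [← Function.update_eq_self i x] at hx
  obtain ⟨hxi, htr⟩ := algebraicIndependent_update_iff.mp hx
  refine algebraicIndependent_update_iff.mpr ⟨hxi, ?_⟩
  have hp0' : (⟨p, hp⟩ : Algebra.adjoin R (x '' {i}ᶜ)) ∈ nonZeroDivisors _ :=
    mem_nonZeroDivisors_of_ne_zero (by simpa [Subtype.ext_iff] using hp0)
  simpa [div_eq_mul_inv, Algebra.smul_def] using htr.inv.smul hp0'

end Exchange

namespace IntermediateField

variable {ι K L : Type*} [DecidableEq ι] [Field K] [Field L] [Algebra K L]

theorem adjoin_range_update_div_le {x : ι → L} {i : ι} {p : L}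
    (hp : p ∈ adjoin K (x '' {i}ᶜ)) :
    adjoin K (Set.range (Function.update x i (p / x i))) ≤ adjoin K (Set.range x) := by
  rw [adjoin_le_iff]
  rintro _ ⟨j, rfl⟩
  rcases eq_or_ne j i with rfl | hj
  · rw [Function.update_self]
    exact div_mem (adjoin.mono _ _ _ (Set.image_subset_range _ _) hp) (subset_adjoin K _ ⟨j, rfl⟩)
  · rw [Function.update_of_ne hj]
    exact subset_adjoin K _ ⟨j, rfl⟩

theorem adjoin_range_update_div {x : ι → L} {i : ι} {p : L}
    (hp : p ∈ adjoin K (x '' {i}ᶜ)) (hp0 : p ≠ 0) :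
    adjoin K (Set.range (Function.update x i (p / x i))) = adjoin K (Set.range x) := by
  set x' := Function.update x i (p / x i)
  have himage : x' '' {i}ᶜ = x '' {i}ᶜ :=
    Set.EqOn.image_eq fun j hj ↦ Function.update_of_ne hj _ x
  have hinvolutive : Function.update x' i (p / x' i) = x := by
    simp [x', div_div_cancel₀ hp0]
  refine le_antisymm (adjoin_range_update_div_le hp) ?_
  conv_lhs => rw [← hinvolutive]
  exact adjoin_range_update_div_le (himage ▸ hp)

end IntermediateField

section Monomials

variable {ι R A : Type*} [Fintype ι] [CommRing R] [CommRing A] [Algebra R A]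

theorem prod_pow_mem_adjoin_image_compl (x : ι → A) {i : ι} {e : ι → ℕ} (he : e i = 0) :
    ∏ j, x j ^ e j ∈ Algebra.adjoin R (x '' {i}ᶜ) := by
  refine Subalgebra.prod_mem _ fun j _ ↦ ?_
  rcases eq_or_ne j i with rfl | hj
  · simp [he]
  · exact pow_mem (Algebra.subset_adjoin (Set.mem_image_of_mem x hj)) _

theorem AlgebraicIndependent.prod_pow_add_prod_pow_ne_zero [CharZero R] {x : ι → A}
    (hx : AlgebraicIndependent R x) (e f : ι → ℕ) :
    ∏ j, x j ^ e j + ∏ j, x j ^ f j ≠ 0 := by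
  classical
  set e' := Finsupp.equivFunOnFinite.symm e
  set f' := Finsupp.equivFunOnFinite.symm f
  have hpoly : MvPolynomial.monomial e' (1 : R) + MvPolynomial.monomial f' 1 ≠ 0 := by
    refine MvPolynomial.ne_zero_iff.mpr ⟨e', ?_⟩
    by_cases hef : f' = e' <;> simp [MvPolynomial.coeff_monomial, hef, one_add_one_eq_two]
  intro h
  refine hpoly (hx.eq_zero_of_aeval_eq_zero _ ?_)
  simpa [MvPolynomial.aeval_monomial, Finsupp.prod_pow, e', f'] using h

end Monomials

/-- If the cluster of a seed is a free generating set of `F` over `ℚ`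
(algebraically independent and generating `F` as a field extension), then so is
the cluster of any mutated seed. -/
theorem seedMutate_freeGenerating {n : ℕ}
    (y : Fin n → F n) (B : Matrix (Fin n) (Fin n) ℤ)
    (hB : ∀ j k, B k j = -B j k)
    (hindep : AlgebraicIndependent ℚ y)
    (hgen : IntermediateField.adjoin ℚ (Set.range y) = ⊤) (i : Fin n) :
    AlgebraicIndependent ℚ (seedMutate (y, B) i).1 ∧
    IntermediateField.adjoin ℚ (Set.range (seedMutate (y, B) i).1) = ⊤ := by
  have hBii : B i i = 0 := by linarith [hB i i]
  set P := ∏ j, y j ^ (max (B j i) 0).toNat + ∏ j, y j ^ (max (-B j i) 0).toNat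
  have hP : P ∈ Algebra.adjoin ℚ (y '' {i}ᶜ) :=
    add_mem (prod_pow_mem_adjoin_image_compl y (by simp [hBii]))
      (prod_pow_mem_adjoin_image_compl y (by simp [hBii]))
  have hP0 : P ≠ 0 := hindep.prod_pow_add_prod_pow_ne_zero _ _
  refine ⟨hindep.update_div hP hP0, ?_⟩
  rw [← hgen]
  exact IntermediateField.adjoin_range_update_div
    (IntermediateField.algebra_adjoin_le_adjoin ℚ _ hP) hP0
end

section
/- (A seed is determined by its cluster.) Let F = Frac(ℚ[x₁,…,xₙ]) with canonical generators x₁,…,xₙ, and let B be an acyclic n×n skew-symmetric integer matrix. Let (u, C) and (u', C') be two seeds reachable from the initial seed (x,B) by finite sequences of seed mutations, and suppose they have the same cluster, i.e., {u₁,…,uₙ} = {u'₁,…,u'ₙ} as subsets of F. Then the seeds agree up to simultaneous relabelling: there is a permutation σ of {1,…,n} such that u'_j = u_{σ(j)} for all j and c'_{jk} = c_{σ(j)σ(k)} for all j, k. -/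
/-!
To a seed `(u, C)` attach the matrix `L` of logarithmic derivatives `∂ₘuⱼ / uⱼ` (the
derivations `∂ₘ` of `ℚ[x₁,…,xₙ]` extend to its fraction field) and the 2-form
`ω = ∑ⱼₖ cⱼₖ d log uⱼ ∧ d log uₖ`, whose matrix is `Lᵀ C L`. Mutation at `i` multiplies `L` on
the left by an involutive elementary matrix `E` and replaces `C` by `C'` with `Eᵀ C' E = C`, so
`ω` is the same for all reachable seeds, and `L` stays invertible, being `diag(1/xⱼ)` initially.
A seed with the same cluster as `(u, C)` has `L` with permuted rows, and invertibility of `L`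
recovers its matrix from `ω`.
-/

open scoped BigOperators

/-- The canonical generators `x₁, …, xₙ` of `F n`. -/
noncomputable def X {n : ℕ} (i : Fin n) : F n :=
  algebraMap (MvPolynomial (Fin n) ℚ) (F n) (MvPolynomial.X i)

/-- A seed is reachable from `s` if it is obtained by a finite sequence of seed mutations. -/
def Reachable {n : ℕ} (s t : (Fin n → F n) × Matrix (Fin n) (Fin n) ℤ) : Prop :=
  Relation.ReflTransGen (fun a b => ∃ i, b = seedMutate a i) s t


open Matrix

lemma Int.cast_max_zero_sub_max_neg_zero {K : Type*} [Ring K] (a : ℤ) :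
    ((max a 0 : ℤ) : K) - ((max (-a) 0 : ℤ) : K) = a := by
  rw [← Int.cast_sub, max_zero_sub_max_neg_zero_eq_self]

namespace Derivation

section ExtendFrac

variable {R A K : Type*} [CommSemiring R] [CommRing A] [Algebra R A] [Field K] [Algebra A K]

open TrivSqZeroExt in
noncomputable def toDualNumber (d : Derivation R A A) : A →+* DualNumber K where
  toFun a := inl (algebraMap A K a) + inr (algebraMap A K (d a))
  map_one' := by ext <;> simp
  map_mul' a b := by
    ext
    · simp
    · simp only [snd_add, snd_inl, snd_inr, fst_add, fst_inl, fst_inr, snd_mul, leibniz, map_add,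
        map_mul, smul_eq_mul, MulOpposite.smul_eq_mul_unop, MulOpposite.unop_op]
      ring
  map_zero' := by ext <;> simp
  map_add' a b := by
    ext <;> simp only [fst_add, snd_add, fst_inl, snd_inl, fst_inr, snd_inr, map_add] <;> ring

lemma fst_toDualNumber (d : Derivation R A A) (a : A) :
    (d.toDualNumber (K := K) a).fst = algebraMap A K a :=
  add_zero _

lemma snd_toDualNumber (d : Derivation R A A) (a : A) :
    (d.toDualNumber (K := K) a).snd = algebraMap A K (d a) :=
  zero_add _

variable [IsDomain A] [IsFractionRing A K]

/-- Elements `a + ε b` with `a ≠ 0` are units, so `toDualNumber` extends to the fraction field. -/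
noncomputable def liftDualNumber (d : Derivation R A A) : K →+* DualNumber K :=
  IsLocalization.lift (M := nonZeroDivisors A) (g := d.toDualNumber) fun y => by
    rw [TrivSqZeroExt.isUnit_iff_isUnit_fst, fst_toDualNumber, isUnit_iff_ne_zero]
    exact IsFractionRing.to_map_ne_zero_of_mem_nonZeroDivisors y.2

lemma liftDualNumber_algebraMap (d : Derivation R A A) (a : A) :
    d.liftDualNumber (algebraMap A K a) = d.toDualNumber a :=
  IsLocalization.lift_eq _ _

lemma fst_liftDualNumber (d : Derivation R A A) (z : K) : (d.liftDualNumber z).fst = z := by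
  have : (TrivSqZeroExt.fstHom ℤ K K).toRingHom.comp d.liftDualNumber = RingHom.id K :=
    IsLocalization.ringHom_ext (nonZeroDivisors A) <| RingHom.ext fun a => by
      simp [liftDualNumber_algebraMap, fst_toDualNumber]
  exact RingHom.congr_fun this z

noncomputable def extendFrac (d : Derivation R A A) : Derivation ℤ K K :=
  Derivation.mk' ((TrivSqZeroExt.sndHom K K).toAddMonoidHom.comp
      d.liftDualNumber.toAddMonoidHom).toIntLinearMap fun z w => by
    simp [TrivSqZeroExt.snd_mul, fst_liftDualNumber, mul_comm, add_comm]

lemma extendFrac_algebraMap (d : Derivation R A A) (a : A) :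
    d.extendFrac (algebraMap A K a) = algebraMap A K (d a) := by
  simp [extendFrac, liftDualNumber_algebraMap, snd_toDualNumber]

end ExtendFrac

section LogDeriv

variable {K : Type*} [Field K] (d : Derivation ℤ K K)

def logDeriv (a : K) : K := d a / a

lemma logDeriv_neg (a : K) : d.logDeriv (-a) = d.logDeriv a := by
  simp [logDeriv, neg_div_neg_eq]

lemma logDeriv_div {a b : K} (ha : a ≠ 0) (hb : b ≠ 0) :
    d.logDeriv (a / b) = d.logDeriv a - d.logDeriv b :=
  letI : Differential K := ⟨d⟩
  Differential.logDeriv_div a b ha hb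

lemma logDeriv_add {a b : K} (ha : a ≠ 0) (hb : b ≠ 0) (hab : a + b ≠ 0) :
    d.logDeriv (a + b) = a / (a + b) * d.logDeriv a + b / (a + b) * d.logDeriv b := by
  simp only [logDeriv, map_add]
  field_simp

lemma logDeriv_prod_pow {ι : Type*} [Fintype ι] {u : ι → K} (hu : ∀ j, u j ≠ 0) (e : ι → ℕ) :
    d.logDeriv (∏ j, u j ^ e j) = ∑ j, (e j : K) * d.logDeriv (u j) :=
  letI : Differential K := ⟨d⟩
  (Differential.logDeriv_prod ι _ _ fun j _ => pow_ne_zero _ (hu j)).trans <|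
    Finset.sum_congr rfl fun j _ => Differential.logDeriv_pow (e j) (u j)

end LogDeriv

end Derivation

section ExchangeRelation

variable {ι K : Type*} [Fintype ι] [Field K]

/-- The monomial `∏ⱼ uⱼ ^ max(cⱼ, 0)`; the exchange relation at `i` is
`uᵢ uᵢ' = exchangeMonomial u c + exchangeMonomial u (-c)` with `c` the `i`-th column. -/
def exchangeMonomial (u : ι → K) (c : ι → ℤ) : K := ∏ j, u j ^ (max (c j) 0).toNat

noncomputable def exchangeWeight (u : ι → K) (c : ι → ℤ) : K :=
  exchangeMonomial u c / (exchangeMonomial u c + exchangeMonomial u (-c))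

lemma exchangeMonomial_ne_zero {u : ι → K} (hu : ∀ j, u j ≠ 0) (c : ι → ℤ) :
    exchangeMonomial u c ≠ 0 :=
  Finset.prod_ne_zero_iff.2 fun j _ => pow_ne_zero _ (hu j)

lemma exchangeMonomial_zero (u : ι → K) : exchangeMonomial u 0 = 1 := by
  simp [exchangeMonomial]

lemma logDeriv_exchangeMonomial (d : Derivation ℤ K K) {u : ι → K} (hu : ∀ j, u j ≠ 0)
    (c : ι → ℤ) :
    d.logDeriv (exchangeMonomial u c) = ∑ j, ((max (c j) 0 : ℤ) : K) * d.logDeriv (u j) := by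
  rw [exchangeMonomial, d.logDeriv_prod_pow hu]
  refine Finset.sum_congr rfl fun j _ => ?_
  rw [← Int.cast_natCast, Int.toNat_of_nonneg (le_max_right _ _)]

lemma logDeriv_exchangeBinomial (d : Derivation ℤ K K) {u : ι → K} (hu : ∀ j, u j ≠ 0)
    {c : ι → ℤ} (hP : exchangeMonomial u c + exchangeMonomial u (-c) ≠ 0) :
    d.logDeriv (exchangeMonomial u c + exchangeMonomial u (-c)) =
      ∑ k, (((max (-c k) 0 : ℤ) : K) + exchangeWeight u c * c k) * d.logDeriv (u k) := by
  have hweight : exchangeMonomial u (-c) / (exchangeMonomial u c + exchangeMonomial u (-c)) =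
      1 - exchangeWeight u c := by
    rw [exchangeWeight]
    field_simp
    ring
  rw [d.logDeriv_add (exchangeMonomial_ne_zero hu _) (exchangeMonomial_ne_zero hu _) hP,
    logDeriv_exchangeMonomial d hu, logDeriv_exchangeMonomial d hu, hweight, ← exchangeWeight,
    Finset.mul_sum, Finset.mul_sum, ← Finset.sum_add_distrib]
  refine Finset.sum_congr rfl fun k _ => ?_
  simp only [Pi.neg_apply]
  linear_combination (exchangeWeight u c * d.logDeriv (u k)) *
    Int.cast_max_zero_sub_max_neg_zero (K := K) (c k)

end ExchangeRelation

lemma mutate_skew {n : ℕ} {C : Matrix (Fin n) (Fin n) ℤ} (hC : ∀ j k, C k j = -C j k)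
    (i j k : Fin n) : mutate C i k j = -mutate C i j k := by
  have hii : C i i = 0 := by linarith [hC i i]
  by_cases hj : j = i <;> by_cases hk : k = i
  · simp [mutate, hj, hk, hii]
  · simp [mutate, hj, hk, hC i k]
  · simp [mutate, hj, hk, hC j i]
  · simp only [mutate, of_apply, hk, hj, or_self, ↓reduceIte, hC j k, hC i k, hC j i, neg_neg]
    ring

section MutationMatrix

variable {n : ℕ} {K : Type*} [CommRing K]

/-- Chosen so that row `i` of `mutationMatrix c i t * L` is `∑ₖ ([-cₖ]₊ + t cₖ) Lₖ - Lᵢ`: for `c`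
the `i`-th column of the exchange matrix and `t = M₊ / (M₊ + M₋)`, this is `d log` of the new
cluster variable `(M₊ + M₋) / uᵢ` when the rows of `L` are the `d log uₖ`. -/
noncomputable def mutationVector (c : Fin n → ℤ) (i : Fin n) (t : K) : Fin n → K :=
  fun k => ((max (-c k) 0 : ℤ) : K) + t * c k - (Pi.single i 2 : Fin n → K) k

noncomputable def mutationMatrix (c : Fin n → ℤ) (i : Fin n) (t : K) : Matrix (Fin n) (Fin n) K :=
  1 + vecMulVec (Pi.single i 1) (mutationVector c i t)

lemma mutationVector_self {c : Fin n → ℤ} {i : Fin n} (hc : c i = 0) (t : K) :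
    mutationVector c i t i = -2 := by
  simp [mutationVector, hc]

lemma mutationMatrix_mul_self {c : Fin n → ℤ} {i : Fin n} (hc : c i = 0) (t : K) :
    mutationMatrix c i t * mutationMatrix c i t = 1 := by
  simp only [mutationMatrix, add_mul, mul_add, one_mul, mul_one, vecMulVec_mul_vecMulVec,
    dotProduct_single, mutationVector_self hc, vecMulVec_smul]
  module

lemma mutationMatrix_mul_apply (c : Fin n → ℤ) (i : Fin n) (t : K)
    (M : Matrix (Fin n) (Fin n) K) (p q : Fin n) :
    (mutationMatrix c i t * M) p q =
      M p q + if p = i then (mutationVector c i t ᵥ* M) q else 0 := by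
  simp [mutationMatrix, add_mul, vecMulVec_mul, vecMulVec_apply, Pi.single_apply]

lemma transpose_mutationMatrix_mul_mul_apply (c : Fin n → ℤ) (i : Fin n) (t : K)
    (M : Matrix (Fin n) (Fin n) K) (p q : Fin n) :
    ((mutationMatrix c i t)ᵀ * M * mutationMatrix c i t) p q =
      M p q + mutationVector c i t p * M i q + M p i * mutationVector c i t q
        + mutationVector c i t p * M i i * mutationVector c i t q := by
  simp only [mutationMatrix, transpose_add, transpose_one, transpose_vecMulVec, add_mul, mul_add,
    one_mul, mul_one, vecMulVec_mul, mul_vecMulVec, single_one_vecMul, mulVec_single_one,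
    Matrix.add_apply, vecMulVec_apply, row_apply, col_apply]
  ring

lemma transpose_mutationMatrix_mul_mutate_mul {C : Matrix (Fin n) (Fin n) ℤ}
    (hC : ∀ j k, C k j = -C j k) (i : Fin n) (t : K) :
    (mutationMatrix (fun k => C k i) i t)ᵀ * (mutate C i).map (↑) *
      mutationMatrix (fun k => C k i) i t = C.map (↑) := by
  have hii : C i i = 0 := by linarith [hC i i]
  ext p q
  rw [transpose_mutationMatrix_mul_mul_apply]
  by_cases hp : p = i <;> by_cases hq : q = i
  · subst hp hq; simp [mutate, hii]
  · subst hp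
    simp only [mutate, map_apply, of_apply, hq, or_false, ↓reduceIte, Int.cast_neg, mutationVector,
      hii, neg_zero, max_self, Int.cast_zero, mul_zero, add_zero, Pi.single_eq_same, zero_sub,
      ne_eq, not_false_eq_true, Pi.single_eq_of_ne, sub_zero, true_or]
    ring
  · subst hq
    simp only [mutate, map_apply, of_apply, hp, or_true, ↓reduceIte, Int.cast_neg, mutationVector,
      ne_eq, not_false_eq_true, Pi.single_eq_of_ne, sub_zero, hii, neg_zero, Int.cast_zero,
      mul_zero, add_zero, max_self, Pi.single_eq_same, zero_sub]
    ring
  · simp only [mutate, map_apply, of_apply, hp, hq, or_self, ↓reduceIte, Int.cast_sub, Int.cast_add,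
      Int.cast_mul, mutationVector, ne_eq, not_false_eq_true, Pi.single_eq_of_ne, sub_zero,
      or_false, Int.cast_neg, or_true, hC i q, neg_neg, hii, neg_zero, Int.cast_zero, mul_zero]
    linear_combination
      ((max (C i q) 0 : ℤ) : K) * Int.cast_max_zero_sub_max_neg_zero (K := K) (C p i) +
        ((max (-C p i) 0 : ℤ) : K) * Int.cast_max_zero_sub_max_neg_zero (K := K) (C i q)

end MutationMatrix

section LogJacobian

variable {ι κ K : Type*} [Field K]

def logJacobian (d : κ → Derivation ℤ K K) (u : ι → K) : Matrix ι κ K :=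
  of fun j m => (d m).logDeriv (u j)

lemma injective_of_isUnit_logJacobian [Fintype ι] [DecidableEq ι] {d : ι → Derivation ℤ K K}
    {u : ι → K} (hL : IsUnit (logJacobian d u)) : Function.Injective u := by
  intro j k hjk
  by_contra hne
  have hdet : (logJacobian d u).det = 0 :=
    det_zero_of_row_eq hne (funext fun m => by simp [logJacobian, hjk])
  rw [isUnit_iff_isUnit_det, hdet] at hL
  exact not_isUnit_zero hL

/-- The exchange binomial cannot vanish: otherwise the log-derivatives of its two monomials
would agree, which forces the column `c` to vanish, and then the binomial is `2`. -/
lemma exchangeBinomial_ne_zero [CharZero K] [Fintype ι] [DecidableEq ι]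
    {d : ι → Derivation ℤ K K} {u : ι → K} (hu : ∀ j, u j ≠ 0) (hL : IsUnit (logJacobian d u))
    (c : ι → ℤ) : exchangeMonomial u c + exchangeMonomial u (-c) ≠ 0 := by
  intro hP
  have hvec : (fun k => (c k : K)) ᵥ* logJacobian d u = 0 := by
    funext m
    have h := congrArg (d m).logDeriv (eq_neg_of_add_eq_zero_right hP)
    rw [Derivation.logDeriv_neg, logDeriv_exchangeMonomial _ hu,
      logDeriv_exchangeMonomial _ hu] at h
    simp only [Pi.neg_apply] at h
    simp only [vecMul, dotProduct, logJacobian, of_apply, Pi.zero_apply]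
    rw [← sub_eq_zero.2 h.symm, ← Finset.sum_sub_distrib]
    refine Finset.sum_congr rfl fun k _ => ?_
    rw [← sub_mul, Int.cast_max_zero_sub_max_neg_zero]
  have hc : c = 0 := by
    have h := vecMul_injective_iff_isUnit.2 hL (hvec.trans (zero_vecMul _).symm)
    funext k
    simpa using congrFun h k
  rw [hc, neg_zero, exchangeMonomial_zero] at hP
  norm_num at hP

end LogJacobian

lemma Function.Injective.exists_perm_of_range_eq {ι α : Type*} {f g : ι → α}
    (hf : Function.Injective f) (hg : Function.Injective g) (h : Set.range f = Set.range g) :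
    ∃ σ : Equiv.Perm ι, ∀ j, f j = g (σ j) :=
  ⟨(Equiv.ofInjective f hf).trans ((Equiv.setCongr h).trans (Equiv.ofInjective g hg).symm),
    fun j => by simp [Equiv.apply_ofInjective_symm]⟩

lemma Matrix.transpose_submatrix_mul_submatrix_mul_submatrix {m n α : Type*} [Fintype m]
    [CommSemiring α] (L : Matrix m n α) (A : Matrix m m α) (σ : m ≃ m) :
    (L.submatrix σ id)ᵀ * A.submatrix σ σ * L.submatrix σ id = Lᵀ * A * L := by
  rw [transpose_submatrix, submatrix_mul_equiv, submatrix_mul_equiv, submatrix_id_id]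

lemma Matrix.eq_of_transpose_mul_mul_eq {m α : Type*} [Fintype m] [DecidableEq m] [CommRing α]
    {L A B : Matrix m m α} (hL : IsUnit L) (h : Lᵀ * A * L = Lᵀ * B * L) : A = B :=
  ((isUnit_transpose L).2 hL).mul_left_cancel (hL.mul_right_cancel h)

section Seed

/-- The `ℤ`-algebra structure that `F n` inherits from the polynomial ring is not reducibly the
canonical one of a ring; use the latter, as the lemmas on derivations of a field above do. -/
noncomputable local instance {n : ℕ} : Algebra ℤ (F n) := Ring.toIntAlgebra _

variable {n : ℕ} (d : Fin n → Derivation ℤ (F n) (F n))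

lemma seedMutate_eq (s : (Fin n → F n) × Matrix (Fin n) (Fin n) ℤ) (i : Fin n) :
    seedMutate s i = (Function.update s.1 i ((exchangeMonomial s.1 (fun k => s.2 k i) +
      exchangeMonomial s.1 (-fun k => s.2 k i)) / s.1 i), mutate s.2 i) :=
  rfl

structure NondegenerateSeed (s : (Fin n → F n) × Matrix (Fin n) (Fin n) ℤ) : Prop where
  ne_zero : ∀ j, s.1 j ≠ 0
  skew : ∀ j k, s.2 k j = -s.2 j k
  isUnit_logJacobian : IsUnit (logJacobian d s.1)

/-- The matrix of the 2-form `∑ⱼₖ cⱼₖ d log uⱼ ∧ d log uₖ` of a seed `(u, C)`. -/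
noncomputable def logForm (s : (Fin n → F n) × Matrix (Fin n) (Fin n) ℤ) :
    Matrix (Fin n) (Fin n) (F n) :=
  (logJacobian d s.1)ᵀ * s.2.map (↑) * logJacobian d s.1

variable {d} {s : (Fin n → F n) × Matrix (Fin n) (Fin n) ℤ}

namespace NondegenerateSeed

lemma exchangeBinomial_ne_zero (hs : NondegenerateSeed d s) (i : Fin n) :
    exchangeMonomial s.1 (fun k => s.2 k i) + exchangeMonomial s.1 (-fun k => s.2 k i) ≠ 0 :=
  _root_.exchangeBinomial_ne_zero hs.ne_zero hs.isUnit_logJacobian _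

lemma logJacobian_seedMutate (hs : NondegenerateSeed d s) (i : Fin n) :
    logJacobian d (seedMutate s i).1 =
      mutationMatrix (fun k => s.2 k i) i (exchangeWeight s.1 fun k => s.2 k i) *
        logJacobian d s.1 := by
  ext p m
  rw [mutationMatrix_mul_apply, seedMutate_eq]
  by_cases hp : p = i
  · subst hp
    simp only [logJacobian, of_apply, Function.update_self, if_true,
      (d m).logDeriv_div (hs.exchangeBinomial_ne_zero p) (hs.ne_zero p),
      logDeriv_exchangeBinomial _ hs.ne_zero (hs.exchangeBinomial_ne_zero p)]
    simp only [vecMul, dotProduct, mutationVector, Pi.single_apply, of_apply, sub_mul, ite_mul,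
      zero_mul, Finset.sum_sub_distrib, Finset.sum_ite_eq', Finset.mem_univ, ↓reduceIte]
    ring
  · simp [logJacobian, hp]

lemma logForm_seedMutate (hs : NondegenerateSeed d s) (i : Fin n) :
    logForm d (seedMutate s i) = logForm d s := by
  have h := congrArg (fun M => (logJacobian d s.1)ᵀ * M * logJacobian d s.1)
    (transpose_mutationMatrix_mul_mutate_mul hs.skew i (exchangeWeight s.1 fun k => s.2 k i))
  rw [logForm, hs.logJacobian_seedMutate, logForm, transpose_mul, seedMutate_eq]
  simpa only [Matrix.mul_assoc] using h

lemma seedMutate (hs : NondegenerateSeed d s) (i : Fin n) :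
    NondegenerateSeed d (seedMutate s i) where
  ne_zero j := by
    rw [seedMutate_eq]
    by_cases hj : j = i
    · subst hj
      simpa using div_ne_zero (hs.exchangeBinomial_ne_zero j) (hs.ne_zero j)
    · simpa [hj] using hs.ne_zero j
  skew := mutate_skew hs.skew i
  isUnit_logJacobian := by
    rw [hs.logJacobian_seedMutate]
    exact (IsUnit.of_mul_eq_one _
      (mutationMatrix_mul_self (by linarith [hs.skew i i]) _)).mul hs.isUnit_logJacobian


lemma reachable (hs : NondegenerateSeed d s) {t : (Fin n → F n) × Matrix (Fin n) (Fin n) ℤ}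
    (h : Reachable s t) : NondegenerateSeed d t ∧ logForm d t = logForm d s := by
  induction h with
  | refl => exact ⟨hs, rfl⟩
  | tail _ hstep ih =>
    obtain ⟨i, rfl⟩ := hstep
    exact ⟨ih.1.seedMutate i, (ih.1.logForm_seedMutate i).trans ih.2⟩

lemma snd_eq_of_logForm_eq {s' : (Fin n → F n) × Matrix (Fin n) (Fin n) ℤ}
    (hs' : NondegenerateSeed d s') (hω : logForm d s' = logForm d s) (σ : Equiv.Perm (Fin n))
    (hσ : ∀ j, s'.1 j = s.1 (σ j)) (j k : Fin n) : s'.2 j k = s.2 (σ j) (σ k) := by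
  have hL : logJacobian d s'.1 = (logJacobian d s.1).submatrix σ id := by
    ext j m
    simp [logJacobian, hσ]
  have hC : s'.2.map (↑) = (s.2.submatrix σ σ).map (Int.cast : ℤ → F n) := by
    refine eq_of_transpose_mul_mul_eq hs'.isUnit_logJacobian ?_
    rw [← logForm, hω, logForm, hL, ← submatrix_map,
      transpose_submatrix_mul_submatrix_mul_submatrix]
  simpa using congrFun₂ hC j k

end NondegenerateSeed

noncomputable def pderivFrac (m : Fin n) : Derivation ℤ (F n) (F n) :=
  (MvPolynomial.pderiv m).extendFrac (R := ℚ)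

lemma logJacobian_pderivFrac_X : logJacobian pderivFrac (fun j : Fin n => X j) =
    diagonal fun j => (X j)⁻¹ := by
  ext j m
  simp only [logJacobian, of_apply, Derivation.logDeriv, pderivFrac, X,
    Derivation.extendFrac_algebraMap, MvPolynomial.pderiv_X, diagonal_apply]
  by_cases h : j = m
  · subst h
    simp
  · simp [h]

lemma X_ne_zero (j : Fin n) : X j ≠ 0 :=
  (map_ne_zero_iff _ (IsFractionRing.injective _ _)).2 (MvPolynomial.X_ne_zero j)

lemma nondegenerateSeed_initial {B : Matrix (Fin n) (Fin n) ℤ} (hB : ∀ j k, B k j = -B j k) :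
    NondegenerateSeed pderivFrac ((fun j => X j), B) where
  ne_zero := X_ne_zero
  skew := hB
  isUnit_logJacobian := by
    rw [logJacobian_pderivFrac_X, isUnit_diagonal]
    exact Pi.isUnit_iff.2 fun j => (inv_ne_zero (X_ne_zero j)).isUnit

end Seed

theorem seed_determined_by_cluster_general {n : ℕ}
    (B : Matrix (Fin n) (Fin n) ℤ) (hB : ∀ j k, B k j = -B j k)
    (s s' : (Fin n → F n) × Matrix (Fin n) (Fin n) ℤ)
    (hs : Reachable ((fun i => X i), B) s)
    (hs' : Reachable ((fun i => X i), B) s')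
    (hcluster : Set.range s'.1 = Set.range s.1) :
    ∃ σ : Equiv.Perm (Fin n),
      (∀ j, s'.1 j = s.1 (σ j)) ∧ (∀ j k, s'.2 j k = s.2 (σ j) (σ k)) := by
  obtain ⟨hreg, hω⟩ := (nondegenerateSeed_initial hB).reachable hs
  obtain ⟨hreg', hω'⟩ := (nondegenerateSeed_initial hB).reachable hs'
  obtain ⟨σ, hσ⟩ :=
    (injective_of_isUnit_logJacobian hreg'.isUnit_logJacobian).exists_perm_of_range_eq
      (injective_of_isUnit_logJacobian hreg.isUnit_logJacobian) hcluster
  exact ⟨σ, hσ, hreg'.snd_eq_of_logForm_eq (hω'.trans hω.symm) σ hσ⟩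

/-- A seed of an acyclic cluster algebra is determined by its cluster: two seeds
reachable from the initial seed `((x₁,…,xₙ), B)` having the same cluster (set of
entries) agree up to simultaneous relabelling by a permutation. -/
theorem seed_determined_by_cluster {n : ℕ} (hn : 1 ≤ n)
    (B : Matrix (Fin n) (Fin n) ℤ) (hB : ∀ j k, B k j = -B j k)
    (hacyclic : ∃ e : Fin n ≃ Fin n, ∀ j k : Fin n, j < k → 0 ≤ B (e j) (e k))
    (s s' : (Fin n → F n) × Matrix (Fin n) (Fin n) ℤ)
    (hs : Reachable ((fun i => X i), B) s)
    (hs' : Reachable ((fun i => X i), B) s')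
    (hcluster : Set.range s'.1 = Set.range s.1) :
    ∃ σ : Equiv.Perm (Fin n),
      (∀ j, s'.1 j = s.1 (σ j)) ∧ (∀ j k, s'.2 j k = s.2 (σ j) (σ k)) :=
  seed_determined_by_cluster_general B hB s s' hs hs' hcluster
end
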